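/- Let (A, B) be a separating pair of continuous aggregation functions on [0,1]². Then for all α, β ∈ Ĩ, 0 ≤ ϱ_{A,B}(α, β) ≤ 1, and ϱ_{A,B}(α, β) = 0 if and only if α = β. -/

import Mathlib

/-- The set of intuitionistic fuzzy values (IFVs). -/
def Itilde : Set (ℝ × ℝ) :=
  {p | 0 ≤ p.1 ∧ p.1 ≤ 1 ∧ 0 ≤ p.2 ∧ p.2 ≤ 1 ∧ p.1 + p.2 ≤ 1}

/-- An aggregation function on `[0,1]²`. -/
structure IsAggregation (A : ℝ → ℝ → ℝ) : Prop where
  mapsTo : ∀ x y, x ∈ Set.Icc (0 : ℝ) 1 → y ∈ Set.Icc (0 : ℝ) 1 →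
    A x y ∈ Set.Icc (0 : ℝ) 1
  mono_left : ∀ x₁ x₂ y, x₁ ∈ Set.Icc (0 : ℝ) 1 → x₂ ∈ Set.Icc (0 : ℝ) 1 →
    y ∈ Set.Icc (0 : ℝ) 1 → x₁ ≤ x₂ → A x₁ y ≤ A x₂ y
  mono_right : ∀ x y₁ y₂, x ∈ Set.Icc (0 : ℝ) 1 → y₁ ∈ Set.Icc (0 : ℝ) 1 →
    y₂ ∈ Set.Icc (0 : ℝ) 1 → y₁ ≤ y₂ → A x y₁ ≤ A x y₂
  zero : A 0 0 = 0
  one : A 1 1 = 1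

/-- `Ā(α) = A(μ_α, 1 - ν_α)`. -/
def aggBar (A : ℝ → ℝ → ℝ) (p : ℝ × ℝ) : ℝ := A p.1 (1 - p.2)

/-- The distance measure `ϱ_{A,B}`. -/
noncomputable def vrhoAB (A B : ℝ → ℝ → ℝ) (a b : ℝ × ℝ) : ℝ :=
  if aggBar A a ≠ aggBar A b then (1 + |aggBar A a - aggBar A b|) / 2
  else |aggBar B a - aggBar B b| / 2

lemma coords_mem_Icc_of_mem_Itilde {p : ℝ × ℝ} (hp : p ∈ Itilde) :
    p.1 ∈ Set.Icc (0 : ℝ) 1 ∧ 1 - p.2 ∈ Set.Icc (0 : ℝ) 1 := by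
  obtain ⟨h0, h1, h2, h3, -⟩ := hp
  exact ⟨⟨h0, h1⟩, by constructor <;> linarith⟩

lemma IsAggregation.aggBar_mem_Icc {A : ℝ → ℝ → ℝ} (hA : IsAggregation A) {p : ℝ × ℝ}
    (hp : p ∈ Itilde) : aggBar A p ∈ Set.Icc (0 : ℝ) 1 :=
  hA.mapsTo _ _ (coords_mem_Icc_of_mem_Itilde hp).1 (coords_mem_Icc_of_mem_Itilde hp).2

lemma abs_sub_le_one_of_mem_Icc {x y : ℝ} (hx : x ∈ Set.Icc (0 : ℝ) 1)
    (hy : y ∈ Set.Icc (0 : ℝ) 1) : |x - y| ≤ 1 := by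
  simpa only [Real.dist_eq] using Real.dist_le_of_mem_Icc_01 hx hy

section vrhoAB

variable (A B : ℝ → ℝ → ℝ) (a b : ℝ × ℝ)

lemma vrhoAB_nonneg : 0 ≤ vrhoAB A B a b := by
  unfold vrhoAB
  split_ifs <;> positivity

lemma vrhoAB_le_one (hA : |aggBar A a - aggBar A b| ≤ 1) (hB : |aggBar B a - aggBar B b| ≤ 1) :
    vrhoAB A B a b ≤ 1 := by
  unfold vrhoAB
  split_ifs <;> linarith

lemma vrhoAB_eq_zero_iff :
    vrhoAB A B a b = 0 ↔ aggBar A a = aggBar A b ∧ aggBar B a = aggBar B b := by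
  unfold vrhoAB
  by_cases hA : aggBar A a = aggBar A b
  · simp [hA, sub_eq_zero]
  · simp only [ne_eq, hA, not_false_eq_true, if_true, false_and, iff_false]
    positivity

end vrhoAB

lemma eq_of_aggBar_eq {A B : ℝ → ℝ → ℝ}
    (hsep : ∀ x₁ y₁ x₂ y₂, x₁ ∈ Set.Icc (0 : ℝ) 1 → y₁ ∈ Set.Icc (0 : ℝ) 1 →
      x₂ ∈ Set.Icc (0 : ℝ) 1 → y₂ ∈ Set.Icc (0 : ℝ) 1 →
      A x₁ y₁ = A x₂ y₂ → B x₁ y₁ = B x₂ y₂ → x₁ = x₂ ∧ y₁ = y₂)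
    {a b : ℝ × ℝ} (ha : a ∈ Itilde) (hb : b ∈ Itilde)
    (hA : aggBar A a = aggBar A b) (hB : aggBar B a = aggBar B b) : a = b := by
  obtain ⟨ha₁, ha₂⟩ := coords_mem_Icc_of_mem_Itilde ha
  obtain ⟨hb₁, hb₂⟩ := coords_mem_Icc_of_mem_Itilde hb
  obtain ⟨h₁, h₂⟩ := hsep _ _ _ _ ha₁ ha₂ hb₁ hb₂ hA hB
  exact Prod.ext h₁ (by linarith)

theorem vrhoAB_nonneg_le_one_and_eq_zero_iff_general (A B : ℝ → ℝ → ℝ)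
    (hA : IsAggregation A) (hB : IsAggregation B)
    (hsep : ∀ x₁ y₁ x₂ y₂, x₁ ∈ Set.Icc (0 : ℝ) 1 → y₁ ∈ Set.Icc (0 : ℝ) 1 →
      x₂ ∈ Set.Icc (0 : ℝ) 1 → y₂ ∈ Set.Icc (0 : ℝ) 1 →
      A x₁ y₁ = A x₂ y₂ → B x₁ y₁ = B x₂ y₂ → x₁ = x₂ ∧ y₁ = y₂)
    (a b : ℝ × ℝ) (ha : a ∈ Itilde) (hb : b ∈ Itilde) :
    0 ≤ vrhoAB A B a b ∧ vrhoAB A B a b ≤ 1 ∧ (vrhoAB A B a b = 0 ↔ a = b) := by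
  refine ⟨vrhoAB_nonneg A B a b,
    vrhoAB_le_one A B a b
      (abs_sub_le_one_of_mem_Icc (hA.aggBar_mem_Icc ha) (hA.aggBar_mem_Icc hb))
      (abs_sub_le_one_of_mem_Icc (hB.aggBar_mem_Icc ha) (hB.aggBar_mem_Icc hb)), ?_⟩
  rw [vrhoAB_eq_zero_iff]
  exact ⟨fun h => eq_of_aggBar_eq hsep ha hb h.1 h.2, by rintro rfl; exact ⟨rfl, rfl⟩⟩

/-- For a separating pair `(A, B)` of continuous aggregation functions and all
`α, β ∈ Ĩ`: `0 ≤ ϱ_{A,B}(α, β) ≤ 1`, and `ϱ_{A,B}(α, β) = 0` iff `α = β`. -/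
theorem vrhoAB_nonneg_le_one_and_eq_zero_iff (A B : ℝ → ℝ → ℝ)
    (hA : IsAggregation A) (hB : IsAggregation B)
    (hAc : ContinuousOn (fun p : ℝ × ℝ => A p.1 p.2)
      (Set.Icc (0 : ℝ) 1 ×ˢ Set.Icc (0 : ℝ) 1))
    (hBc : ContinuousOn (fun p : ℝ × ℝ => B p.1 p.2)
      (Set.Icc (0 : ℝ) 1 ×ˢ Set.Icc (0 : ℝ) 1))
    (hsep : ∀ x₁ y₁ x₂ y₂, x₁ ∈ Set.Icc (0 : ℝ) 1 → y₁ ∈ Set.Icc (0 : ℝ) 1 →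
      x₂ ∈ Set.Icc (0 : ℝ) 1 → y₂ ∈ Set.Icc (0 : ℝ) 1 →
      A x₁ y₁ = A x₂ y₂ → B x₁ y₁ = B x₂ y₂ → x₁ = x₂ ∧ y₁ = y₂)
    (a b : ℝ × ℝ) (ha : a ∈ Itilde) (hb : b ∈ Itilde) :
    0 ≤ vrhoAB A B a b ∧ vrhoAB A B a b ≤ 1 ∧ (vrhoAB A B a b = 0 ↔ a = b) :=
  vrhoAB_nonneg_le_one_and_eq_zero_iff_general A B hA hB hsep a b ha hb
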